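/- arXiv:1306.6439 — 5 statements merged into one kernel-verified Lean document; each statement's English description precedes it below -/
import Mathlib

section
/- Let A be an associative algebra over a field k of characteristic zero and let T : A → A be a linear map satisfying the Rota–Baxter relation of weight θ: T(a)T(b) = T(T(a)b + aT(b) + θab) for all a, b. Define a ≺ b := aT(b), a ≻ b := T(a)b, and a · b := θab. Then (A, ≺, ≻, ·) satisfies all seven tridendriform axioms: (a≺b)≺c = a≺(b≺c + b≻c + b·c); (a≻b)≺c = a≻(b≺c); a≻(b≻c) = (a≺b + a≻b + a·b)≻c; (a·b)·c = a·(b·c); (a≻b)·c = a≻(b·c); (a≺b)·c = a·(b≻c); (a·b)≺c = a·(b≺c). -/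
def IsRotaBaxter {R A : Type*} [SMul R A] [Add A] [Mul A] (θ : R) (T : A → A) : Prop :=
  ∀ a b : A, T a * T b = T (T a * b + a * T b + θ • (a * b))

namespace IsRotaBaxter

variable {R A : Type*} [SMul R A] [NonUnitalSemiring A] {θ : R} {T : A → A}

theorem mul_apply_mul_apply_eq (h : IsRotaBaxter θ T) (a b c : A) :
    a * T b * T c = a * T (b * T c + T b * c + θ • (b * c)) := by
  rw [mul_assoc, h, add_comm (T b * c)]

theorem apply_mul_apply_mul_eq (h : IsRotaBaxter θ T) (a b c : A) :
    T a * (T b * c) = T (a * T b + T a * b + θ • (a * b)) * c := by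
  rw [add_comm (a * T b), ← h, mul_assoc]

end IsRotaBaxter

theorem rotaBaxter_tridendriform_general {k A : Type*} [Field k] [Ring A] [Algebra k A]
    (θ : k) (T : A →ₗ[k] A)
    (hRB : ∀ a b : A, T a * T b = T (T a * b + a * T b + θ • (a * b))) :
    ∀ a b c : A,
      ((a * T b) * T c = a * T ((b * T c) + (T b * c) + θ • (b * c))) ∧
      ((T a * b) * T c = T a * (b * T c)) ∧
      (T a * (T b * c) = T ((a * T b) + (T a * b) + θ • (a * b)) * c) ∧
      (θ • ((θ • (a * b)) * c) = θ • (a * (θ • (b * c)))) ∧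
      (θ • ((T a * b) * c) = T a * (θ • (b * c))) ∧
      (θ • ((a * T b) * c) = θ • (a * (T b * c))) ∧
      ((θ • (a * b)) * T c = θ • (a * (b * T c))) := by
  have h : IsRotaBaxter θ T := hRB
  intro a b c
  refine ⟨h.mul_apply_mul_apply_eq a b c, mul_assoc _ _ _, h.apply_mul_apply_mul_eq a b c,
    ?_, ?_, ?_, ?_⟩ <;> simp only [mul_assoc, smul_mul_assoc, mul_smul_comm]

/-- A Rota–Baxter operator of weight θ on an associative k-algebra induces a
tridendriform structure via a ≺ b = aT(b), a ≻ b = T(a)b, a · b = θab. -/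
theorem rotaBaxter_tridendriform {k A : Type*} [Field k] [CharZero k] [Ring A] [Algebra k A]
    (θ : k) (T : A →ₗ[k] A)
    (hRB : ∀ a b : A, T a * T b = T (T a * b + a * T b + θ • (a * b))) :
    ∀ a b c : A,
      ((a * T b) * T c = a * T ((b * T c) + (T b * c) + θ • (b * c))) ∧
      ((T a * b) * T c = T a * (b * T c)) ∧
      (T a * (T b * c) = T ((a * T b) + (T a * b) + θ • (a * b)) * c) ∧
      (θ • ((θ • (a * b)) * c) = θ • (a * (θ • (b * c)))) ∧
      (θ • ((T a * b) * c) = T a * (θ • (b * c))) ∧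
      (θ • ((a * T b) * c) = θ • (a * (T b * c))) ∧
      ((θ • (a * b)) * T c = θ • (a * (b * T c))) :=
  rotaBaxter_tridendriform_general θ T hRB
end

section
/- In any tridendriform algebra (D, ≺, ≻, ·), the operations a ⪯ b := a ≺ b + a · b together with ≻ form a dendriform algebra: (a⪯b)⪯c = a⪯(b⪯c + b≻c), (a≻b)⪯c = a≻(b⪯c), and a≻(b≻c) = (a⪯b + a≻b)≻c. -/
section

variable {R M : Type*} [CommSemiring R] [AddCommMonoid M] [Module R M]
  (p s d : M →ₗ[R] M →ₗ[R] M)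

theorem prec_add_dot_assoc
    (ax1 : ∀ a b c : M, p (p a b) c = p a (p b c + s b c + d b c))
    (ax4 : ∀ a b c : M, d (d a b) c = d a (d b c))
    (ax6 : ∀ a b c : M, d (p a b) c = d a (s b c))
    (ax7 : ∀ a b c : M, p (d a b) c = d a (p b c)) (a b c : M) :
    p (p a b + d a b) c + d (p a b + d a b) c
      = p a ((p b c + d b c) + s b c) + d a ((p b c + d b c) + s b c) := by
  simp only [map_add, LinearMap.add_apply, ax1, ax4, ax6, ax7]
  abel

theorem succ_prec_add_dot_assoc
    (ax2 : ∀ a b c : M, p (s a b) c = s a (p b c))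
    (ax5 : ∀ a b c : M, d (s a b) c = s a (d b c)) (a b c : M) :
    p (s a b) c + d (s a b) c = s a (p b c + d b c) := by
  rw [ax2, ax5, map_add]

theorem succ_succ_assoc_prec_add_dot
    (ax3 : ∀ a b c : M, s a (s b c) = s (p a b + s a b + d a b) c) (a b c : M) :
    s a (s b c) = s ((p a b + d a b) + s a b) c := by
  rw [ax3, add_right_comm]

end

/-- In a tridendriform algebra, ⪯ := ≺ + · together with ≻ form a dendriform algebra. -/
theorem tridendriform_left_dendriform {k D : Type*} [Field k] [AddCommGroup D] [Module k D]
    (p s d : D →ₗ[k] D →ₗ[k] D)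
    (ax1 : ∀ a b c : D, p (p a b) c = p a (p b c + s b c + d b c))
    (ax2 : ∀ a b c : D, p (s a b) c = s a (p b c))
    (ax3 : ∀ a b c : D, s a (s b c) = s (p a b + s a b + d a b) c)
    (ax4 : ∀ a b c : D, d (d a b) c = d a (d b c))
    (ax5 : ∀ a b c : D, d (s a b) c = s a (d b c))
    (ax6 : ∀ a b c : D, d (p a b) c = d a (s b c))
    (ax7 : ∀ a b c : D, p (d a b) c = d a (p b c)) :
    ∀ a b c : D,
      ((p (p a b + d a b) c + d (p a b + d a b) c)
        = p a ((p b c + d b c) + s b c) + d a ((p b c + d b c) + s b c)) ∧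
      ((p (s a b) c + d (s a b) c) = s a (p b c + d b c)) ∧
      (s a (s b c) = s ((p a b + d a b) + s a b) c) :=
  fun a b c =>
    ⟨prec_add_dot_assoc p s d ax1 ax4 ax6 ax7 a b c,
      succ_prec_add_dot_assoc p s d ax2 ax5 a b c,
      succ_succ_assoc_prec_add_dot p s d ax3 a b c⟩
end

section
/- Let A be an associative algebra and T : A → A a Rota–Baxter operator of weight θ. Then the product a ▷ b := [T(a), b] + θab = T(a)b − bT(a) + θab is left pre-Lie: (a▷b)▷c − a▷(b▷c) = (b▷a)▷c − b▷(a▷c). -/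
/-! The antisymmetrisation `a ▷ b - b ▷ a` is sent by `T` to the commutator `[T a, T b]`; this is
the Rota–Baxter identity rearranged. For any linear `T`, Jacobi for `[T a, [T b, -]]` gives
`a ▷ (b ▷ c) - b ▷ (a ▷ c) = [[T a, T b], c] + θ (a ▷ b - b ▷ a) c`, and the right-hand side is
`(a ▷ b - b ▷ a) ▷ c` exactly when `T (a ▷ b - b ▷ a) = [T a, T b]`. -/

/-- The pre-Lie product a ▷ b = [T(a),b] + θab from a weight-θ Rota–Baxter operator. -/
def rbTriangle {k A : Type*} [Field k] [Ring A] [Algebra k A]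
    (T : A →ₗ[k] A) (θ : k) (a b : A) : A :=
  T a * b - b * T a + θ • (a * b)

section

variable {k A : Type*} [Field k] [Ring A] [Algebra k A] (T : A →ₗ[k] A) (θ : k)

theorem rbTriangle_sub_left (x y c : A) :
    rbTriangle T θ (x - y) c = rbTriangle T θ x c - rbTriangle T θ y c := by
  simp only [rbTriangle, map_sub, sub_mul, mul_sub, smul_sub]
  abel

theorem map_rbTriangle_sub_rbTriangle_swap
    (hRB : ∀ a b : A, T a * T b = T (T a * b + a * T b + θ • (a * b))) (a b : A) :
    T (rbTriangle T θ a b - rbTriangle T θ b a) = T a * T b - T b * T a := by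
  rw [hRB a b, hRB b a, ← map_sub]
  congr 1
  simp only [rbTriangle]
  abel

theorem rbTriangle_sub_rbTriangle_swap_right {a b : A}
    (hab : T (rbTriangle T θ a b - rbTriangle T θ b a) = T a * T b - T b * T a) (c : A) :
    rbTriangle T θ a (rbTriangle T θ b c) - rbTriangle T θ b (rbTriangle T θ a c)
      = rbTriangle T θ (rbTriangle T θ a b - rbTriangle T θ b a) c := by
  conv_rhs => rw [rbTriangle, hab]
  simp only [rbTriangle, mul_add, add_mul, mul_sub, sub_mul, smul_mul_assoc,
    mul_smul_comm, smul_add, smul_sub, smul_smul, mul_assoc]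
  abel

end

theorem rotaBaxter_preLie_general {k A : Type*} [Field k] [Ring A] [Algebra k A]
    (θ : k) (T : A →ₗ[k] A)
    (hRB : ∀ a b : A, T a * T b = T (T a * b + a * T b + θ • (a * b))) :
    ∀ a b c : A,
      rbTriangle T θ (rbTriangle T θ a b) c - rbTriangle T θ a (rbTriangle T θ b c)
      = rbTriangle T θ (rbTriangle T θ b a) c - rbTriangle T θ b (rbTriangle T θ a c) := by
  intro a b c
  rw [sub_eq_sub_iff_sub_eq_sub, ← rbTriangle_sub_left,
    rbTriangle_sub_rbTriangle_swap_right T θ (map_rbTriangle_sub_rbTriangle_swap T θ hRB a b)]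

theorem rotaBaxter_preLie {k A : Type*} [Field k] [CharZero k] [Ring A] [Algebra k A]
    (θ : k) (T : A →ₗ[k] A)
    (hRB : ∀ a b : A, T a * T b = T (T a * b + a * T b + θ • (a * b))) :
    ∀ a b c : A,
      rbTriangle T θ (rbTriangle T θ a b) c - rbTriangle T θ a (rbTriangle T θ b c)
      = rbTriangle T θ (rbTriangle T θ b a) c - rbTriangle T θ b (rbTriangle T θ a c) :=
  rotaBaxter_preLie_general θ T hRB
end

section
/- Let A be an associative algebra and T : A → A a Rota–Baxter operator of weight θ. Then the product a ▷' b := [T(a), b] − θba is left pre-Lie: (a▷'b)▷'c − a▷'(b▷'c) = (b▷'a)▷'c − b▷'(a▷'c). -/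
/-!
Write `a ▷ b = ⁅T a, b⁆ - θ • (b * a)`. The Rota–Baxter identity, applied to `T b * T a`, gives
`T (a ▷ b - b ▷ a) = ⁅T a, T b⁆`. On the other hand, for any linear `T` the Jacobi identity in `A`
gives `a ▷ (b ▷ c) - b ▷ (a ▷ c) = ⁅⁅T a, T b⁆, c⁆ - θ • (c * (a ▷ b - b ▷ a))`, and by the first
identity the right-hand side is `(a ▷ b - b ▷ a) ▷ c`, which is the pre-Lie identity.
-/

/-- The pre-Lie product a ▷' b = [T(a),b] − θba from a weight-θ Rota–Baxter operator. -/
def rbTriangle' {k A : Type*} [Field k] [Ring A] [Algebra k A]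
    (T : A →ₗ[k] A) (θ : k) (a b : A) : A :=
  T a * b - b * T a - θ • (b * a)

section

variable {k A : Type*} [Field k] [Ring A] [Algebra k A] (T : A →ₗ[k] A) (θ : k)

theorem rbTriangle'_eq_lie (a b : A) : rbTriangle' T θ a b = ⁅T a, b⁆ - θ • (b * a) := by
  rw [rbTriangle', Ring.lie_def]

theorem rbTriangle'_sub_left (a b c : A) :
    rbTriangle' T θ (a - b) c = rbTriangle' T θ a c - rbTriangle' T θ b c := by
  simp only [rbTriangle', map_sub, sub_mul, mul_sub, smul_sub]
  abel

theorem rbTriangle'_comm_left (a b c : A) :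
    rbTriangle' T θ a (rbTriangle' T θ b c) - rbTriangle' T θ b (rbTriangle' T θ a c)
      = ⁅⁅T a, T b⁆, c⁆ - θ • (c * (rbTriangle' T θ a b - rbTriangle' T θ b a)) := by
  simp only [rbTriangle', Ring.lie_def, sub_mul, mul_sub, smul_sub,
    smul_mul_assoc, mul_smul_comm, smul_smul, mul_assoc]
  module

theorem map_rbTriangle'_sub_rbTriangle'
    (hRB : ∀ a b : A, T a * T b = T (T a * b + a * T b + θ • (a * b))) (a b : A) :
    T (rbTriangle' T θ a b - rbTriangle' T θ b a) = ⁅T a, T b⁆ := by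
  simp only [rbTriangle', Ring.lie_def, map_sub, map_smul, hRB a b, hRB b a, map_add]
  abel

end

theorem rotaBaxter_preLie'_general {k A : Type*} [Field k] [Ring A] [Algebra k A]
    (θ : k) (T : A →ₗ[k] A)
    (hRB : ∀ a b : A, T a * T b = T (T a * b + a * T b + θ • (a * b))) :
    ∀ a b c : A,
      rbTriangle' T θ (rbTriangle' T θ a b) c - rbTriangle' T θ a (rbTriangle' T θ b c)
      = rbTriangle' T θ (rbTriangle' T θ b a) c - rbTriangle' T θ b (rbTriangle' T θ a c) := by
  intro a b c
  rw [sub_eq_sub_iff_sub_eq_sub, ← rbTriangle'_sub_left, rbTriangle'_comm_left,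
    rbTriangle'_eq_lie, map_rbTriangle'_sub_rbTriangle' T θ hRB]

theorem rotaBaxter_preLie' {k A : Type*} [Field k] [CharZero k] [Ring A] [Algebra k A]
    (θ : k) (T : A →ₗ[k] A)
    (hRB : ∀ a b : A, T a * T b = T (T a * b + a * T b + θ • (a * b))) :
    ∀ a b c : A,
      rbTriangle' T θ (rbTriangle' T θ a b) c - rbTriangle' T θ a (rbTriangle' T θ b c)
      = rbTriangle' T θ (rbTriangle' T θ b a) c - rbTriangle' T θ b (rbTriangle' T θ a c) :=
  rotaBaxter_preLie'_general θ T hRB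
end

section
/- Let σ : {1,…,n} ↠ {1,…,r} and τ : {1,…,m} ↠ {1,…,p} be surjections and N ≥ n+m. Then T_σ(N) × T_τ(N) equals the disjoint union of T_{FG}(N) over all pairs of maps F : {1,…,n} → ℕ₊, G : {1,…,m} → ℕ₊ such that std(F) = σ, std(G) = τ, and the juxtaposition FG : {1,…,n+m} → ℕ₊ is a standard (surjective onto an initial interval) map. -/
/-!
For a point `st` of the cube, the only candidate for `FG` is the standardization of `st` read
from the top, i.e. `i ↦ #{values of st that are ≥ st i}`: it is standard, `st` lies on its
diagonal, and its two halves standardize to `σ` and `τ` because `s ∈ T_σ` and `t ∈ T_τ`.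
It is the only candidate because a standard map is determined by its strict order, by induction
on its values. Conversely, restricting `st ∈ T_{FG}` to either half and using `std F = σ`,
`std G = τ` gives `s ∈ T_σ` and `t ∈ T_τ`.
-/

/-- σ is a standard map, i.e. a surjection onto some initial interval {1,…,r}. -/
def IsStandard {n : ℕ} (σ : Fin n → ℕ) : Prop :=
  ∃ r : ℕ, 1 ≤ r ∧ Set.range σ = Set.Icc 1 r

/-- F takes positive values and its standardization is σ. -/
def StdEq {n : ℕ} (F σ : Fin n → ℕ) : Prop :=
  (∀ i, 1 ≤ F i) ∧ ∀ i j, (F i < F j ↔ σ i < σ j)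

/-- The point s of the hypercube {0,…,N−1}^n lies on the partial diagonal T_σ(N). -/
def InDiag {n : ℕ} (N : ℕ) (σ : Fin n → ℕ) (s : Fin n → ℕ) : Prop :=
  (∀ i, s i < N) ∧ ∀ i j, (s j < s i ↔ σ i < σ j) ∧ (s i = s j ↔ σ i = σ j)

namespace Finset

variable {α : Type*} [LinearOrder α]

def upperRank (T : Finset α) (v : α) : ℕ :=
  #(T.filter (v ≤ ·))

lemma one_le_upperRank {T : Finset α} {v : α} (hv : v ∈ T) : 1 ≤ T.upperRank v :=
  card_pos.mpr ⟨v, mem_filter.mpr ⟨hv, le_rfl⟩⟩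

lemma upperRank_le_card (T : Finset α) (v : α) : T.upperRank v ≤ #T :=
  card_filter_le _ _

lemma upperRank_lt_upperRank_iff {T : Finset α} {v w : α} (hw : w ∈ T) :
    T.upperRank v < T.upperRank w ↔ w < v := by
  constructor
  · intro h
    by_contra! hvw
    exact h.not_ge <| card_le_card <| monotone_filter_right _ fun _ _ ↦ hvw.trans
  · intro hwv
    refine card_lt_card ⟨monotone_filter_right _ fun _ _ ↦ hwv.le.trans, fun hsub ↦ ?_⟩
    exact hwv.not_ge (mem_filter.mp (hsub (mem_filter.mpr ⟨hw, le_rfl⟩))).2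

lemma image_upperRank (T : Finset α) : T.image T.upperRank = Icc 1 #T := by
  have hinj : Set.InjOn T.upperRank T := fun v hv w hw hvw ↦ by
    by_contra hne
    rcases lt_or_gt_of_ne hne with h | h
    · exact ((upperRank_lt_upperRank_iff hv).mpr h).ne' hvw
    · exact ((upperRank_lt_upperRank_iff hw).mpr h).ne hvw
  refine eq_of_subset_of_card_le (fun c hc ↦ ?_) ?_
  · obtain ⟨v, hv, rfl⟩ := mem_image.mp hc
    exact mem_Icc.mpr ⟨one_le_upperRank hv, upperRank_le_card T v⟩
  · rw [Nat.card_Icc, card_image_of_injOn hinj, Nat.add_sub_cancel]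

end Finset

open Finset

section RevStd

variable {ι α : Type*} [Fintype ι] [LinearOrder α]

/-- Standardization with the order reversed, as in `InDiag`: the largest value of `u` gets rank
`1`. -/
def revStd (u : ι → α) (i : ι) : ℕ :=
  (univ.image u).upperRank (u i)

lemma one_le_revStd (u : ι → α) (i : ι) : 1 ≤ revStd u i :=
  one_le_upperRank (mem_image_of_mem u (mem_univ i))

lemma revStd_lt_revStd_iff (u : ι → α) (i j : ι) : revStd u i < revStd u j ↔ u j < u i :=
  upperRank_lt_upperRank_iff (mem_image_of_mem u (mem_univ j))

lemma range_revStd (u : ι → α) : Set.range (revStd u) = Set.Icc 1 #(univ.image u) := by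
  rw [← coe_Icc, ← image_upperRank, coe_image, coe_image, coe_univ, Set.image_univ,
    ← Set.range_comp]
  rfl

lemma isStandard_revStd {k : ℕ} (u : Fin k → α) (hk : 0 < k) : IsStandard (revStd u) :=
  ⟨_, card_pos.mpr ⟨u ⟨0, hk⟩, mem_image_of_mem u (mem_univ _)⟩, range_revStd u⟩

end RevStd

namespace IsStandard

variable {k : ℕ} {ρ ρ' : Fin k → ℕ}

lemma one_le (hρ : IsStandard ρ) (i : Fin k) : 1 ≤ ρ i := by
  obtain ⟨r, -, hr⟩ := hρ
  exact (hr ▸ Set.mem_range_self i : ρ i ∈ Set.Icc 1 r).1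

/-- Since `ρ` takes every value in `1, …, ρ i`, a chain below `ρ i` forces `ρ' i ≥ ρ i`. -/
lemma le_of_lt_imp_lt (hρ : IsStandard ρ) (hρ' : ∀ i, 1 ≤ ρ' i)
    (h : ∀ i j, ρ i < ρ j → ρ' i < ρ' j) (i : Fin k) : ρ i ≤ ρ' i := by
  obtain ⟨r, -, hr⟩ := hρ
  induction hc : ρ i using Nat.strong_induction_on generalizing i with
  | _ c ih =>
    rcases Nat.lt_or_ge c 2 with hc2 | hc2
    · have := hρ' i
      omega
    · have hmem : c - 1 ∈ Set.range ρ := by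
        rw [hr]
        obtain ⟨-, hle⟩ : ρ i ∈ Set.Icc 1 r := hr ▸ Set.mem_range_self i
        exact ⟨by omega, by omega⟩
      obtain ⟨j, hj⟩ := hmem
      have := ih (c - 1) (by omega) j hj
      have := h j i (by omega)
      omega

lemma eq_of_lt_iff_lt (hρ : IsStandard ρ) (hρ' : IsStandard ρ')
    (h : ∀ i j, ρ i < ρ j ↔ ρ' i < ρ' j) : ρ = ρ' :=
  funext fun i ↦ le_antisymm
    (hρ.le_of_lt_imp_lt hρ'.one_le (fun i j ↦ (h i j).mp) i)
    (hρ'.le_of_lt_imp_lt hρ.one_le (fun i j ↦ (h i j).mpr) i)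

end IsStandard

lemma inDiag_revStd {n N : ℕ} {u : Fin n → ℕ} (hu : ∀ i, u i < N) : InDiag N (revStd u) u := by
  refine ⟨hu, fun i j ↦ ⟨(revStd_lt_revStd_iff u i j).symm, ?_⟩⟩
  have := revStd_lt_revStd_iff u i j
  have := revStd_lt_revStd_iff u j i
  omega

namespace InDiag

variable {n m N : ℕ}

lemma lt_iff_lt {ρ σ s : Fin n → ℕ} (hρ : InDiag N ρ s) (hσ : InDiag N σ s) (i j : Fin n) :
    ρ i < ρ j ↔ σ i < σ j :=
  (hρ.2 i j).1.symm.trans (hσ.2 i j).1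

lemma of_stdEq {F σ s : Fin n → ℕ} (hF : StdEq F σ) (h : InDiag N F s) : InDiag N σ s := by
  refine ⟨h.1, fun i j ↦ ⟨(h.2 i j).1.trans (hF.2 i j), ?_⟩⟩
  have := hF.2 i j
  have := hF.2 j i
  have := h.2 i j
  omega

lemma stdEq {F σ s : Fin n → ℕ} (hF : ∀ i, 1 ≤ F i) (hFs : InDiag N F s) (hσs : InDiag N σ s) :
    StdEq F σ :=
  ⟨hF, hFs.lt_iff_lt hσs⟩

lemma append_left {ρ s : Fin n → ℕ} {ρ' t : Fin m → ℕ}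
    (h : InDiag N (Fin.append ρ ρ') (Fin.append s t)) : InDiag N ρ s := by
  simpa [InDiag] using
    And.intro (fun i ↦ h.1 (Fin.castAdd m i)) (fun i j ↦ h.2 (Fin.castAdd m i) (Fin.castAdd m j))

lemma append_right {ρ s : Fin n → ℕ} {ρ' t : Fin m → ℕ}
    (h : InDiag N (Fin.append ρ ρ') (Fin.append s t)) : InDiag N ρ' t := by
  simpa [InDiag] using
    And.intro (fun i ↦ h.1 (Fin.natAdd n i)) (fun i j ↦ h.2 (Fin.natAdd n i) (Fin.natAdd n j))

lemma eq_revStd {ρ u : Fin n → ℕ} (h : InDiag N ρ u) (hn : 0 < n) (hρ : IsStandard ρ) :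
    ρ = revStd u :=
  hρ.eq_of_lt_iff_lt (isStandard_revStd u hn) fun i j ↦
    (h.2 i j).1.symm.trans (revStd_lt_revStd_iff u i j).symm

end InDiag

lemma Fin.append_inj {n m : ℕ} {α : Type*} {F F' : Fin n → α} {G G' : Fin m → α} :
    Fin.append F G = Fin.append F' G' ↔ F = F' ∧ G = G' := by
  refine ⟨fun h ↦ ⟨funext fun i ↦ ?_, funext fun j ↦ ?_⟩, fun ⟨hF, hG⟩ ↦ hF ▸ hG ▸ rfl⟩
  · simpa using congrFun h (Fin.castAdd m i)
  · simpa using congrFun h (Fin.natAdd n j)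

theorem diag_product_partition_general (n m N : ℕ) (hn : 1 ≤ n)
    (σ : Fin n → ℕ) (τ : Fin m → ℕ)
    (s : Fin n → ℕ) (t : Fin m → ℕ) :
    (InDiag N σ s ∧ InDiag N τ t) ↔
      ∃! FG : (Fin n → ℕ) × (Fin m → ℕ),
        StdEq FG.1 σ ∧ StdEq FG.2 τ ∧ IsStandard (Fin.append FG.1 FG.2) ∧
        InDiag N (Fin.append FG.1 FG.2) (Fin.append s t) := by
  have hnm : 0 < n + m := by omega
  constructor
  · rintro ⟨hs, ht⟩
    set ρ := revStd (Fin.append s t)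
    set F : Fin n → ℕ := fun i ↦ ρ (Fin.castAdd m i)
    set G : Fin m → ℕ := fun j ↦ ρ (Fin.natAdd n j)
    have hρ : IsStandard ρ := isStandard_revStd _ hnm
    have hsplit : Fin.append F G = ρ := Fin.append_castAdd_natAdd
    have hdiag : InDiag N ρ (Fin.append s t) :=
      inDiag_revStd (Fin.addCases (by simpa using hs.1) (by simpa using ht.1))
    rw [← hsplit] at hρ hdiag
    refine ⟨(F, G), ⟨hdiag.append_left.stdEq (fun i ↦ one_le_revStd _ (Fin.castAdd m i)) hs,
      hdiag.append_right.stdEq (fun j ↦ one_le_revStd _ (Fin.natAdd n j)) ht, hρ, hdiag⟩, ?_⟩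
    rintro ⟨F', G'⟩ ⟨-, -, hFG, hFGdiag⟩
    exact Prod.ext_iff.mpr (Fin.append_inj.mp ((hFGdiag.eq_revStd hnm hFG).trans hsplit.symm))
  · rintro ⟨⟨F, G⟩, ⟨hF, hG, -, hdiag⟩, -⟩
    exact ⟨hdiag.append_left.of_stdEq hF, hdiag.append_right.of_stdEq hG⟩

/-- T_σ(N) × T_τ(N) is the disjoint union of the T_{FG}(N) over pairs (F,G) with
std(F) = σ, std(G) = τ, and FG standard. -/
theorem diag_product_partition (n m N : ℕ) (hn : 1 ≤ n) (hm : 1 ≤ m) (hN : n + m ≤ N)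
    (σ : Fin n → ℕ) (τ : Fin m → ℕ) (hσ : IsStandard σ) (hτ : IsStandard τ)
    (s : Fin n → ℕ) (t : Fin m → ℕ) :
    (InDiag N σ s ∧ InDiag N τ t) ↔
      ∃! FG : (Fin n → ℕ) × (Fin m → ℕ),
        StdEq FG.1 σ ∧ StdEq FG.2 τ ∧ IsStandard (Fin.append FG.1 FG.2) ∧
        InDiag N (Fin.append FG.1 FG.2) (Fin.append s t) :=
  diag_product_partition_general n m N hn σ τ s t
end
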